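/- Suppose ‖exp(−Φ)/Z‖_{L^p(μ)} ≤ K for some p ∈ [1,∞] and K < ∞, and inf_{θ∈Θ} Z̃(θ) ≥ ℓ for some ℓ > 0. Then ‖π_Z − π_{Z̃}‖_tv ≤ (2K/(ℓ C_Z)) ‖Z − Z̃‖_{L^{p/(p−1)}(μ)}. In particular, the map Z ↦ π_Z is locally Lipschitz on the set Z_{ℓ,p,K} of measurable Z : Θ → [ℓ,∞) with Z ∈ L^{p/(p−1)}(μ) and ‖exp(−Φ)/Z‖_{L^p(μ)} ≤ K. -/

import Mathlib

open MeasureTheory Real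
open scoped ENNReal NNReal

noncomputable section

/-- Normalizing constant `C_Z = ∫ exp(-Φ)/Z dμ`. -/
def CZ {Θ : Type*} [MeasurableSpace Θ] (μ : Measure Θ) (Φ Z : Θ → ℝ) : ℝ :=
  ∫ θ, Real.exp (-Φ θ) / Z θ ∂μ

/-- The doubly-intractable posterior `π_Z` with `μ`-density `exp(-Φ)/(Z C_Z)`. -/
def post {Θ : Type*} [MeasurableSpace Θ] (μ : Measure Θ) (Φ Z : Θ → ℝ) : Measure Θ :=
  (ENNReal.ofReal (CZ μ Φ Z))⁻¹ •
    μ.withDensity (fun θ => ENNReal.ofReal (Real.exp (-Φ θ) / Z θ))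

/-- Total variation distance `sup_{|f|_∞ ≤ 1} |E_{ν₁} f - E_{ν₂} f|`. -/
def tvDist {Θ : Type*} [MeasurableSpace Θ] (ν₁ ν₂ : Measure Θ) : ℝ :=
  ⨆ f : {f : Θ → ℝ // Measurable f ∧ ∀ θ, |f θ| ≤ 1},
    |(∫ θ, f.1 θ ∂ν₁) - ∫ θ, f.1 θ ∂ν₂|

lemma integral_post {Θ : Type*} [MeasurableSpace Θ] (μ : Measure Θ) (Φ Z : Θ → ℝ)
    (hΦ : Measurable Φ) (hZ : Measurable Z) (hZpos : ∀ θ, 0 < Z θ)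
    (hC : 0 ≤ CZ μ Φ Z) (f : Θ → ℝ) :
    ∫ θ, f θ ∂(post μ Φ Z) = (CZ μ Φ Z)⁻¹ * ∫ θ, (Real.exp (-Φ θ) / Z θ) * f θ ∂μ := by
  have hg : Measurable fun θ => (Real.exp (-Φ θ) / Z θ).toNNReal :=
    (hΦ.neg.exp.div hZ).real_toNNReal
  rw [post, integral_smul_measure]
  have h1 : (fun θ => ENNReal.ofReal (Real.exp (-Φ θ) / Z θ))
      = fun θ => ((Real.exp (-Φ θ) / Z θ).toNNReal : ℝ≥0∞) := rfl
  rw [h1, integral_withDensity_eq_integral_smul hg, ENNReal.toReal_inv,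
    ENNReal.toReal_ofReal hC, smul_eq_mul]
  congr 1
  refine integral_congr_ae (Filter.Eventually.of_forall fun θ => ?_)
  have hnn : 0 ≤ Real.exp (-Φ θ) / Z θ :=
    div_nonneg (Real.exp_pos _).le (hZpos θ).le
  simp [NNReal.smul_def, Real.coe_toNNReal _ hnn]

theorem tv_stability_Lp_Lipschitz {Θ : Type*} [MeasurableSpace Θ] (μ : Measure Θ) [SigmaFinite μ]
    (Φ Z Zt : Θ → ℝ) (hΦ : Measurable Φ) (hZ : Measurable Z) (hZt : Measurable Zt)
    (hZpos : ∀ θ, 0 < Z θ) (hZtpos : ∀ θ, 0 < Zt θ)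
    (hint : Integrable (fun θ => Real.exp (-Φ θ) / Z θ) μ)
    (hintt : Integrable (fun θ => Real.exp (-Φ θ) / Zt θ) μ)
    (hC : 0 < CZ μ Φ Z) (hCt : 0 < CZ μ Φ Zt)
    (p q : ENNReal) (hp : 1 ≤ p) (hpq : 1 / p + 1 / q = 1)
    (K : ℝ) (hK : 0 ≤ K)
    (hKp : eLpNorm (fun θ => Real.exp (-Φ θ) / Z θ) p μ ≤ ENNReal.ofReal K)
    (ℓ : ℝ) (hℓ : 0 < ℓ) (hlb : ∀ θ, ℓ ≤ Zt θ) :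
    ENNReal.ofReal (tvDist (post μ Φ Z) (post μ Φ Zt)) ≤
      ENNReal.ofReal (2 * K / (ℓ * CZ μ Φ Z)) * eLpNorm (fun θ => Z θ - Zt θ) q μ := by
  set g : Θ → ℝ := fun θ => Real.exp (-Φ θ) / Z θ with hg_def
  set gt : Θ → ℝ := fun θ => Real.exp (-Φ θ) / Zt θ with hgt_def
  set w : Θ → ℝ := fun θ => Z θ - Zt θ with hw_def
  have hgm : Measurable g := (hΦ.neg.exp.div hZ)
  have hgtm : Measurable gt := (hΦ.neg.exp.div hZt)
  have hwm : Measurable w := hZ.sub hZt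
  have hgnn : ∀ θ, 0 ≤ g θ := fun θ => div_nonneg (Real.exp_pos _).le (hZpos θ).le
  have hgtnn : ∀ θ, 0 ≤ gt θ := fun θ => div_nonneg (Real.exp_pos _).le (hZtpos θ).le
  have hKpos : 0 < K := by
    rcases hK.lt_or_eq with h | h
    · exact h
    · exfalso
      rw [← h, ENNReal.ofReal_zero, le_zero_iff] at hKp
      have hp0 : p ≠ 0 := (zero_lt_one.trans_le hp).ne'
      have hae := (eLpNorm_eq_zero_iff hgm.aestronglyMeasurable hp0).1 hKp
      have : CZ μ Φ Z = 0 := by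
        rw [CZ]; exact integral_eq_zero_of_ae hae
      exact hC.ne' this
  set N : ℝ≥0∞ := eLpNorm w q μ with hN_def
  by_cases hNtop : N = ∞
  · rw [hNtop, ENNReal.mul_top]
    · exact le_top
    · simp only [ne_eq, ENNReal.ofReal_eq_zero, not_le]
      exact div_pos (by nlinarith) (mul_pos hℓ hC)
  -- Hölder
  have hpq1 : (1 : ℝ≥0∞) / 1 = 1 / p + 1 / q := by rw [hpq]; norm_num
  have holder : eLpNorm (fun θ => g θ * w θ) 1 μ ≤ ENNReal.ofReal K * N := by
    have h := eLpNorm_smul_le_mul_eLpNorm (μ := μ) (f := w) (φ := g)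
      (r := 1) hwm.aestronglyMeasurable hgm.aestronglyMeasurable (hpqr := ⟨by simpa [one_div] using hpq1.symm⟩)
    simp only [smul_eq_mul] at h
    exact h.trans (mul_le_mul' hKp le_rfl)
  have hgw_int : Integrable (fun θ => g θ * w θ) μ := by
    rw [← memLp_one_iff_integrable]
    exact ⟨(hgm.mul hwm).aestronglyMeasurable,
      holder.trans_lt (ENNReal.mul_lt_top ENNReal.ofReal_lt_top (lt_top_iff_ne_top.2 hNtop))⟩
  have hint_gw : ∫ θ, g θ * |w θ| ∂μ ≤ K * N.toReal := by
    have h1 : (fun θ => g θ * |w θ|) = fun θ => ‖g θ * w θ‖ := by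
      funext θ; rw [Real.norm_eq_abs, abs_mul, abs_of_nonneg (hgnn θ)]
    rw [h1]
    have h2 : ENNReal.ofReal (∫ θ, ‖g θ * w θ‖ ∂μ)
        = ∫⁻ θ, ‖g θ * w θ‖₊ ∂μ := ofReal_integral_norm_eq_lintegral_enorm hgw_int
    have h3 : eLpNorm (fun θ => g θ * w θ) 1 μ = ∫⁻ θ, ‖g θ * w θ‖₊ ∂μ :=
      eLpNorm_one_eq_lintegral_enorm
    have h4 : ENNReal.ofReal (∫ θ, ‖g θ * w θ‖ ∂μ) ≤ ENNReal.ofReal K * N := by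
      rw [h2, ← h3]; exact holder
    have h5 : ENNReal.ofReal K * N = ENNReal.ofReal (K * N.toReal) := by
      rw [ENNReal.ofReal_mul hK, ENNReal.ofReal_toReal hNtop]
    rw [h5] at h4
    have h6 : 0 ≤ K * N.toReal := mul_nonneg hK ENNReal.toReal_nonneg
    exact (ENNReal.ofReal_le_ofReal_iff h6).1 h4
  have hpt : ∀ θ, |g θ - gt θ| ≤ ℓ⁻¹ * (g θ * |w θ|) := by
    intro θ
    have hZne : Z θ ≠ 0 := (hZpos θ).ne'
    have hZtne : Zt θ ≠ 0 := (hZtpos θ).ne'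
    have heq : g θ - gt θ = g θ * (Zt θ - Z θ) / Zt θ := by
      simp only [hg_def, hgt_def]; field_simp
    rw [heq, abs_div, abs_mul, abs_of_nonneg (hgnn θ), abs_of_pos (hZtpos θ)]
    have hww : |Zt θ - Z θ| = |w θ| := by rw [hw_def]; exact abs_sub_comm _ _
    rw [hww, inv_mul_eq_div]
    exact div_le_div_of_nonneg_left (mul_nonneg (hgnn θ) (abs_nonneg _)) hℓ (hlb θ)
  have hgsub_int : Integrable (fun θ => g θ - gt θ) μ := hint.sub hintt
  have hbig_int : Integrable (fun θ => ℓ⁻¹ * (g θ * |w θ|)) μ :=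
    (hgw_int.abs.congr (Filter.Eventually.of_forall fun θ => by
      simp only [abs_mul, abs_of_nonneg (hgnn θ)])).const_mul _
  set I : ℝ := ∫ θ, |g θ - gt θ| ∂μ with hI_def
  have hI_bound : I ≤ ℓ⁻¹ * (K * N.toReal) := by
    have h1 : I ≤ ∫ θ, ℓ⁻¹ * (g θ * |w θ|) ∂μ :=
      integral_mono hgsub_int.abs hbig_int hpt
    rw [integral_const_mul] at h1
    exact h1.trans (mul_le_mul_of_nonneg_left hint_gw (by positivity))
  have hInn : 0 ≤ I := integral_nonneg fun θ => abs_nonneg _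
  have habs : ∀ h : Θ → ℝ, |∫ θ, h θ ∂μ| ≤ ∫ θ, |h θ| ∂μ := fun h => by
    simpa [Real.norm_eq_abs] using norm_integral_le_integral_norm (μ := μ) h
  set B : ℝ := 2 * K / (ℓ * CZ μ Φ Z) with hB_def
  have hBnn : 0 ≤ B := div_nonneg (by nlinarith) (mul_pos hℓ hC).le
  haveI : Nonempty {f : Θ → ℝ // Measurable f ∧ ∀ θ, |f θ| ≤ 1} :=
    ⟨⟨fun _ => 0, measurable_const, fun θ => by simp⟩⟩
  have key : tvDist (post μ Φ Z) (post μ Φ Zt) ≤ B * N.toReal := by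
    rw [tvDist]
    apply ciSup_le
    rintro ⟨f, hfm, hfb⟩
    simp only
    rw [integral_post μ Φ Z hΦ hZ hZpos hC.le f,
        integral_post μ Φ Zt hΦ hZt hZtpos hCt.le f]
    have hCne : CZ μ Φ Z ≠ 0 := hC.ne'
    have hCtne : CZ μ Φ Zt ≠ 0 := hCt.ne'
    have hfg_int : Integrable (fun θ => g θ * f θ) μ :=
      (hint.bdd_mul (c := 1) hfm.aestronglyMeasurable
        (Filter.Eventually.of_forall fun θ => by rw [Real.norm_eq_abs]; exact hfb θ)).congr
        (Filter.Eventually.of_forall fun θ => mul_comm _ _)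
    have hfgt_int : Integrable (fun θ => gt θ * f θ) μ :=
      (hintt.bdd_mul (c := 1) hfm.aestronglyMeasurable
        (Filter.Eventually.of_forall fun θ => by rw [Real.norm_eq_abs]; exact hfb θ)).congr
        (Filter.Eventually.of_forall fun θ => mul_comm _ _)
    set S : ℝ := ∫ θ, g θ * f θ ∂μ with hS_def
    set St : ℝ := ∫ θ, gt θ * f θ ∂μ with hSt_def
    have hSsub : |S - St| ≤ I := by
      have h1 : S - St = ∫ θ, (g θ - gt θ) * f θ ∂μ := by
        rw [hS_def, hSt_def, ← integral_sub hfg_int hfgt_int]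
        congr 1; funext θ; ring
      rw [h1]
      have hia : Integrable (fun θ => |(g θ - gt θ) * f θ|) μ :=
        (hfg_int.sub hfgt_int).abs.congr
          (Filter.Eventually.of_forall fun θ => by simp only [Pi.sub_apply, sub_mul])
      refine (habs _).trans (integral_mono hia hgsub_int.abs fun θ => ?_)
      show |(g θ - gt θ) * f θ| ≤ |g θ - gt θ|
      rw [abs_mul]
      calc |g θ - gt θ| * |f θ| ≤ |g θ - gt θ| * 1 :=
            mul_le_mul_of_nonneg_left (hfb θ) (abs_nonneg _)
        _ = |g θ - gt θ| := mul_one _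
    have hSt_bound : |St| ≤ CZ μ Φ Zt := by
      refine (habs _).trans ?_
      have h2 : ∫ θ, |gt θ * f θ| ∂μ ≤ ∫ θ, gt θ ∂μ := by
        refine integral_mono hfgt_int.abs hintt fun θ => ?_
        show |gt θ * f θ| ≤ gt θ
        rw [abs_mul, abs_of_nonneg (hgtnn θ)]
        calc gt θ * |f θ| ≤ gt θ * 1 := mul_le_mul_of_nonneg_left (hfb θ) (hgtnn θ)
          _ = gt θ := mul_one _
      exact h2.trans_eq rfl
    have hCsub : |CZ μ Φ Zt - CZ μ Φ Z| ≤ I := by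
      have h1 : CZ μ Φ Zt - CZ μ Φ Z = ∫ θ, (gt θ - g θ) ∂μ := by
        rw [CZ, CZ, ← integral_sub hintt hint]
      rw [h1]
      refine (habs _).trans ?_
      refine le_of_eq (integral_congr_ae (Filter.Eventually.of_forall fun θ => ?_))
      exact abs_sub_comm _ _
    have hdiff : |(CZ μ Φ Z)⁻¹ - (CZ μ Φ Zt)⁻¹| ≤ I / (CZ μ Φ Z * CZ μ Φ Zt) := by
      have h1 : (CZ μ Φ Z)⁻¹ - (CZ μ Φ Zt)⁻¹
          = (CZ μ Φ Zt - CZ μ Φ Z) / (CZ μ Φ Z * CZ μ Φ Zt) := by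
        field_simp
      rw [h1, abs_div, abs_of_pos (mul_pos hC hCt)]
      gcongr
    have hrearr : (CZ μ Φ Z)⁻¹ * S - (CZ μ Φ Zt)⁻¹ * St
        = (CZ μ Φ Z)⁻¹ * (S - St) + ((CZ μ Φ Z)⁻¹ - (CZ μ Φ Zt)⁻¹) * St := by ring
    rw [hrearr]
    calc |(CZ μ Φ Z)⁻¹ * (S - St) + ((CZ μ Φ Z)⁻¹ - (CZ μ Φ Zt)⁻¹) * St|
        ≤ |(CZ μ Φ Z)⁻¹ * (S - St)| + |((CZ μ Φ Z)⁻¹ - (CZ μ Φ Zt)⁻¹) * St| := abs_add_le _ _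
      _ = (CZ μ Φ Z)⁻¹ * |S - St| + |(CZ μ Φ Z)⁻¹ - (CZ μ Φ Zt)⁻¹| * |St| := by
          rw [abs_mul, abs_mul, abs_of_pos (inv_pos.2 hC)]
      _ ≤ (CZ μ Φ Z)⁻¹ * I + (I / (CZ μ Φ Z * CZ μ Φ Zt)) * CZ μ Φ Zt := by
          refine add_le_add (mul_le_mul_of_nonneg_left hSsub (inv_pos.2 hC).le) ?_
          exact mul_le_mul hdiff hSt_bound (abs_nonneg _)
            (div_nonneg hInn (mul_pos hC hCt).le)
      _ = 2 * I / CZ μ Φ Z := by field_simp; ring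
      _ ≤ 2 * (ℓ⁻¹ * (K * N.toReal)) / CZ μ Φ Z := by gcongr
      _ = B * N.toReal := by rw [hB_def]; field_simp
  calc ENNReal.ofReal (tvDist (post μ Φ Z) (post μ Φ Zt))
      ≤ ENNReal.ofReal (B * N.toReal) := ENNReal.ofReal_le_ofReal key
    _ = ENNReal.ofReal B * N := by
        rw [ENNReal.ofReal_mul hBnn, ENNReal.ofReal_toReal hNtop]
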